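/- Fix integers N ≥ 1 and 0 ≤ n ≤ N−1, reals α, β ∈ (−1/2,1/2) with β > 0, α + β > 0 and α ≠ β, and reals x, y. Let G₁₂(z,w) = [Φ(x,z)/Φ(y,w)]·[(1/2−z)/(1/2−w)]^n·[(z+α)/(w+α)]·[(z+β)/(z−β)]·[(w−β)/(w+β)]·(z+w)/(2z(z−w)). Define K₁₂(x,y) = −( ∮_{Γ_{1/2}}dz ∮_{Γ_{−1/2,−α,−β}}dw + ∮_{Γ_{β}}dz ∮_{Γ_{−1/2,−α}}dw ) G₁₂(z,w), where in each double integral the z-contour and the w-contour are disjoint, and K̄₁₂(x,y) = −∮_{Γ_{1/2}}dz ∮_{Γ_{−1/2,−α,−β}}dw G₁₂(z,w). Then K₁₂(x,y) = K̄₁₂(x,y) + (α+β)·f₊^β(x)·g₂(y). -/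

import Mathlib

open Complex

/-- Contour integral over the positively oriented circle of center `c`, radius `r`,
normalized by 1/(2πi). -/
noncomputable def cInt (c : ℂ) (r : ℝ) (f : ℂ → ℂ) : ℂ :=
  (2 * Real.pi * Complex.I)⁻¹ * ∮ z in C(c, r), f z

/-- `okCircle c r avoid` : positive radius, circle not enclosing nor touching any point of
`avoid`. -/
def okCircle (c r : ℝ) (avoid : List ℝ) : Prop := 0 < r ∧ ∀ p ∈ avoid, r < |c - p|

/-- Two circles with real centers are disjoint. -/
def disjC (c₁ r₁ c₂ r₂ : ℝ) : Prop := r₁ + r₂ < |c₁ - c₂|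

/-- Φ(x,z) = e^{−xz}·((1/2+z)/(1/2−z))^{N−1}. -/
noncomputable def PhiF (N : ℕ) (x : ℝ) (z : ℂ) : ℂ :=
  Complex.exp (-(x : ℂ) * z) * (((1 / 2 : ℂ) + z) / ((1 / 2 : ℂ) - z)) ^ (N - 1)

/-- The integrand G₁₂(z,w) of the (12) kernel entry. -/
noncomputable def G12 (N n : ℕ) (α β x y : ℝ) (z w : ℂ) : ℂ :=
  PhiF N x z / PhiF N y w * (((1 / 2 : ℂ) - z) / ((1 / 2 : ℂ) - w)) ^ n *
    ((z + (α : ℂ)) / (w + (α : ℂ))) * ((z + (β : ℂ)) / (z - (β : ℂ))) *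
    ((w - (β : ℂ)) / (w + (β : ℂ))) * (z + w) / (2 * z * (z - w))

/-- g₂(x) over Γ_{1/2,α}. -/
noncomputable def g2F (N n : ℕ) (α x : ℝ) (r₁ r₂ : ℝ) : ℂ :=
  cInt (1 / 2) r₁ (fun z => PhiF N x z * ((1 / 2 : ℂ) + z)⁻¹ ^ n / (z - (α : ℂ))) +
    cInt (α : ℂ) r₂ (fun z => PhiF N x z * ((1 / 2 : ℂ) + z)⁻¹ ^ n / (z - (α : ℂ)))

/-- f₊^β(x) = Φ(x,β)·(1/2−β)^n. -/
noncomputable def fplus (N n : ℕ) (β x : ℝ) : ℂ :=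
  PhiF N x β * ((1 / 2 : ℂ) - (β : ℂ)) ^ n


open Metric MeasureTheory intervalIntegral Set

/-! ### Generic lemmas about `cInt` -/

lemma two_pi_I_ne : (2 * Real.pi * Complex.I : ℂ) ≠ 0 := by
  simp [Real.pi_ne_zero, Complex.I_ne_zero]

lemma cInt_congr {c : ℂ} {r : ℝ} (hr : 0 ≤ r) {f g : ℂ → ℂ} (h : Set.EqOn f g (sphere c r)) :
    cInt c r f = cInt c r g := by
  unfold cInt; rw [circleIntegral.integral_congr hr h]

lemma cInt_add {f g : ℂ → ℂ} {c : ℂ} {r : ℝ} (hf : CircleIntegrable f c r)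
    (hg : CircleIntegrable g c r) :
    cInt c r (fun z => f z + g z) = cInt c r f + cInt c r g := by
  unfold cInt
  rw [show (∮ z in C(c,r), (fun z => f z + g z) z) = ∮ z in C(c,r), (f z + g z) from rfl]
  rw [show (∮ z in C(c,r), (f z + g z))
      = ∫ θ in (0:ℝ)..2*Real.pi, deriv (circleMap c r) θ • (f (circleMap c r θ) + g (circleMap c r θ)) from rfl]
  simp_rw [smul_add]
  rw [intervalIntegral.integral_add hf.out hg.out, mul_add]
  rfl

lemma cInt_add2 {f g : ℂ → ℂ} {c : ℂ} {r : ℝ} (hf : CircleIntegrable f c r)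
    (hg : CircleIntegrable g c r) :
    cInt c r (fun z => f z + g z) = cInt c r f + cInt c r g := cInt_add hf hg

lemma cInt_add3 {f g h : ℂ → ℂ} {c : ℂ} {r : ℝ} (hf : CircleIntegrable f c r)
    (hg : CircleIntegrable g c r) (hh : CircleIntegrable h c r) :
    cInt c r (fun z => f z + g z + h z)
      = cInt c r f + cInt c r g + cInt c r h := by
  rw [cInt_add (f := fun z => f z + g z) (g := h)
    ((hf.add hg : CircleIntegrable (f + g) c r) : CircleIntegrable (fun z => f z + g z) c r) hh,
    cInt_add hf hg]

lemma cInt_const_mul (a : ℂ) (f : ℂ → ℂ) (c : ℂ) (r : ℝ) :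
    cInt c r (fun z => a * f z) = a * cInt c r f := by
  unfold cInt; rw [circleIntegral.integral_const_mul]; ring

lemma cInt_radius_eq {c : ℂ} {f : ℂ → ℂ} {r R : ℝ} (h0 : 0 < r) (h0' : 0 < R)
    (hd : ∀ z ∈ closedBall c (max r R) \ ball c (min r R), DifferentiableAt ℂ f z) :
    cInt c R f = cInt c r f := by
  unfold cInt
  rcases le_total r R with h | h
  · rw [max_eq_right h, min_eq_left h] at hd
    rw [circleIntegral_eq_of_differentiable_on_annulus_off_countable h0 h (Set.countable_empty)
      (fun z hz => (hd z hz).continuousAt.continuousWithinAt)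
      (fun z hz => hd z ⟨ball_subset_closedBall hz.1.1, fun h' => hz.1.2 (ball_subset_closedBall h')⟩)]
  · rw [max_eq_left h, min_eq_right h] at hd
    rw [circleIntegral_eq_of_differentiable_on_annulus_off_countable h0' h (Set.countable_empty)
      (fun z hz => (hd z hz).continuousAt.continuousWithinAt)
      (fun z hz => hd z ⟨ball_subset_closedBall hz.1.1, fun h' => hz.1.2 (ball_subset_closedBall h')⟩)]

lemma cInt_center {c : ℂ} {R : ℝ} (h0 : 0 < R) {f : ℂ → ℂ}
    (hd : ∀ z ∈ closedBall c R, DifferentiableAt ℂ f z) :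
    cInt c R (fun z => (z - c)⁻¹ * f z) = f c := by
  unfold cInt
  have hdc : DiffContOnCl ℂ f (ball c R) :=
    DifferentiableOn.diffContOnCl (fun z hz =>
      ((hd z (closure_ball_subset_closedBall hz)).differentiableWithinAt))
  have := hdc.circleIntegral_sub_inv_smul (mem_ball_self h0)
  simp only [smul_eq_mul] at this
  rw [show (∮ z in C(c,R), (fun z => (z-c)⁻¹ * f z) z) = ∮ z in C(c,R), (z-c)⁻¹ * f z from rfl,
    this, inv_mul_cancel_left₀ two_pi_I_ne]

lemma circleIntegral_swap {c₁ c₂ : ℂ} {r₁ r₂ : ℝ} {G : ℂ → ℂ → ℂ}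
    (hG : ∀ θ₁ θ₂ : ℝ, ContinuousAt (fun p : ℂ × ℂ => G p.1 p.2)
        (circleMap c₁ r₁ θ₁, circleMap c₂ r₂ θ₂)) :
    (∮ z in C(c₁, r₁), ∮ w in C(c₂, r₂), G z w) = ∮ w in C(c₂, r₂), ∮ z in C(c₁, r₁), G z w := by
  have h2π : (0:ℝ) ≤ 2*Real.pi := by positivity
  set F : ℝ → ℝ → ℂ := fun θ₁ θ₂ => deriv (circleMap c₁ r₁) θ₁ *
    (deriv (circleMap c₂ r₂) θ₂ * G (circleMap c₁ r₁ θ₁) (circleMap c₂ r₂ θ₂)) with hF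
  have hFc : Continuous (Function.uncurry F) := by
    apply Continuous.mul
    · simp only [deriv_circleMap]
      exact (((continuous_circleMap 0 r₁).comp continuous_fst).mul continuous_const)
    apply Continuous.mul
    · simp only [deriv_circleMap]
      exact (((continuous_circleMap 0 r₂).comp continuous_snd).mul continuous_const)
    · rw [continuous_iff_continuousAt]
      intro p
      show ContinuousAt ((fun q : ℂ × ℂ => G q.1 q.2) ∘
        (fun p : ℝ × ℝ => (circleMap c₁ r₁ p.1, circleMap c₂ r₂ p.2))) p
      exact ContinuousAt.comp (hG p.1 p.2)
        ((((continuous_circleMap c₁ r₁).comp continuous_fst).prodMk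
          ((continuous_circleMap c₂ r₂).comp continuous_snd)).continuousAt)
  have key : ∫ θ₁ in (0:ℝ)..2*Real.pi, ∫ θ₂ in (0:ℝ)..2*Real.pi, F θ₁ θ₂
      = ∫ θ₂ in (0:ℝ)..2*Real.pi, ∫ θ₁ in (0:ℝ)..2*Real.pi, F θ₁ θ₂ := by
    simp_rw [intervalIntegral.integral_of_le h2π]
    apply MeasureTheory.integral_integral_swap
    rw [Measure.prod_restrict]
    have : IntegrableOn (Function.uncurry F) (Icc (0:ℝ) (2*Real.pi) ×ˢ Icc (0:ℝ) (2*Real.pi))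
        (volume.prod volume) := by
      rw [← Measure.volume_eq_prod]
      exact hFc.continuousOn.integrableOn_compact (isCompact_Icc.prod isCompact_Icc)
    exact this.mono_set (Set.prod_mono Ioc_subset_Icc_self Ioc_subset_Icc_self)
  calc (∮ z in C(c₁, r₁), ∮ w in C(c₂, r₂), G z w)
      = ∫ θ₁ in (0:ℝ)..2*Real.pi, ∫ θ₂ in (0:ℝ)..2*Real.pi, F θ₁ θ₂ := by
        show (∫ θ₁ in (0:ℝ)..2*Real.pi, deriv (circleMap c₁ r₁) θ₁ •
          ∮ w in C(c₂, r₂), G (circleMap c₁ r₁ θ₁) w) = _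
        refine intervalIntegral.integral_congr (fun θ₁ _ => ?_)
        show deriv (circleMap c₁ r₁) θ₁ • (∫ θ₂ in (0:ℝ)..2*Real.pi,
          deriv (circleMap c₂ r₂) θ₂ • G (circleMap c₁ r₁ θ₁) (circleMap c₂ r₂ θ₂)) = _
        simp_rw [smul_eq_mul, ← intervalIntegral.integral_const_mul]
        rfl
    _ = ∫ θ₂ in (0:ℝ)..2*Real.pi, ∫ θ₁ in (0:ℝ)..2*Real.pi, F θ₁ θ₂ := key
    _ = ∮ w in C(c₂, r₂), ∮ z in C(c₁, r₁), G z w := by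
        show _ = (∫ θ₂ in (0:ℝ)..2*Real.pi, deriv (circleMap c₂ r₂) θ₂ •
          ∮ z in C(c₁, r₁), G z (circleMap c₂ r₂ θ₂))
        refine intervalIntegral.integral_congr (fun θ₂ _ => ?_)
        show _ = deriv (circleMap c₂ r₂) θ₂ • (∫ θ₁ in (0:ℝ)..2*Real.pi,
          deriv (circleMap c₁ r₁) θ₁ • G (circleMap c₁ r₁ θ₁) (circleMap c₂ r₂ θ₂))
        simp_rw [smul_eq_mul, ← intervalIntegral.integral_const_mul]
        refine intervalIntegral.integral_congr (fun θ₁ _ => ?_)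
        ring

lemma cInt_swap {c₁ c₂ : ℂ} {r₁ r₂ : ℝ} {G : ℂ → ℂ → ℂ}
    (hG : ∀ θ₁ θ₂ : ℝ, ContinuousAt (fun p : ℂ × ℂ => G p.1 p.2)
        (circleMap c₁ r₁ θ₁, circleMap c₂ r₂ θ₂)) :
    cInt c₁ r₁ (fun z => cInt c₂ r₂ (fun w => G z w))
      = cInt c₂ r₂ (fun w => cInt c₁ r₁ (fun z => G z w)) := by
  unfold cInt
  simp_rw [circleIntegral.integral_const_mul]
  rw [circleIntegral_swap hG]

lemma circleIntegrable_param {c₁ c₂ : ℂ} {r₁ r₂ : ℝ} {G : ℂ → ℂ → ℂ}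
    (hG : ∀ θ₁ θ₂ : ℝ, ContinuousAt (fun p : ℂ × ℂ => G p.1 p.2)
        (circleMap c₁ r₁ θ₁, circleMap c₂ r₂ θ₂)) :
    CircleIntegrable (fun z => cInt c₂ r₂ (fun w => G z w)) c₁ r₁ := by
  have hc : Continuous (fun θ => cInt c₂ r₂ (fun w => G (circleMap c₁ r₁ θ) w)) := by
    have : Continuous (Function.uncurry (fun (θ φ : ℝ) =>
        deriv (circleMap c₂ r₂) φ • G (circleMap c₁ r₁ θ) (circleMap c₂ r₂ φ))) := by
      refine Continuous.smul (f := fun p : ℝ × ℝ => deriv (circleMap c₂ r₂) p.2)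
        (g := fun p : ℝ × ℝ => G (circleMap c₁ r₁ p.1) (circleMap c₂ r₂ p.2)) ?_ ?_
      · simp only [deriv_circleMap]
        exact ((continuous_circleMap 0 r₂).comp continuous_snd).mul continuous_const
      · rw [continuous_iff_continuousAt]
        intro p
        show ContinuousAt ((fun q : ℂ × ℂ => G q.1 q.2) ∘
          (fun p : ℝ × ℝ => (circleMap c₁ r₁ p.1, circleMap c₂ r₂ p.2))) p
        exact ContinuousAt.comp (hG p.1 p.2)
          ((((continuous_circleMap c₁ r₁).comp continuous_fst).prodMk
            ((continuous_circleMap c₂ r₂).comp continuous_snd)).continuousAt)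
    exact continuous_const.mul
      (continuous_parametric_intervalIntegral_of_continuous' this 0 (2*Real.pi))
  exact hc.intervalIntegrable 0 (2*Real.pi)

lemma circleIntegral_neg_center (c : ℂ) (r : ℝ) (g : ℂ → ℂ) :
    (∮ w in C(-c, r), g w) = ∮ z in C(c, r), -g (-z) := by
  set h : ℝ → ℂ := fun θ => deriv (circleMap c r) θ • (-g (-circleMap c r θ)) with hh
  have hper : Function.Periodic h (2*Real.pi) := by
    intro θ
    simp only [hh, deriv_circleMap]
    rw [(periodic_circleMap 0 r) θ, (periodic_circleMap c r) θ]
  have key : ∀ θ : ℝ, deriv (circleMap (-c) r) θ • g (circleMap (-c) r θ) = h (θ + Real.pi) := by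
    intro θ
    simp only [hh, deriv_circleMap]
    have e1 : circleMap 0 r (θ + Real.pi) = -circleMap 0 r θ := by
      simp only [circleMap, Complex.ofReal_add, add_mul, Complex.exp_add, Complex.exp_pi_mul_I]
      ring
    have e2 : -circleMap c r (θ + Real.pi) = circleMap (-c) r θ := by
      simp only [circleMap, Complex.ofReal_add, add_mul, Complex.exp_add, Complex.exp_pi_mul_I]
      ring
    rw [e1, e2]
    simp only [smul_eq_mul]
    ring
  show (∫ θ in (0:ℝ)..2*Real.pi, deriv (circleMap (-c) r) θ • g (circleMap (-c) r θ))
      = ∫ θ in (0:ℝ)..2*Real.pi, h θ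
  rw [intervalIntegral.integral_congr (fun θ _ => key θ)]
  rw [intervalIntegral.integral_comp_add_right h Real.pi]
  rw [show (0:ℝ)+Real.pi = Real.pi by ring, show 2*Real.pi+Real.pi = Real.pi + 2*Real.pi by ring]
  rw [hper.intervalIntegral_add_eq Real.pi 0]
  rw [zero_add]

/-! ### Metric helpers -/

lemma dist_real (a b : ℝ) : dist (a:ℂ) (b:ℂ) = |a - b| := by
  rw [Complex.dist_eq, ← Complex.ofReal_sub, Complex.norm_real, Real.norm_eq_abs]

lemma sub_ne_of_cball {z c p : ℂ} {r : ℝ} (hz : z ∈ closedBall c r) (h : r < dist c p) :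
    z - p ≠ 0 := by
  intro h0
  rw [sub_eq_zero] at h0
  subst h0
  rw [mem_closedBall, dist_comm] at hz
  linarith

lemma sub_ne_real {c p r : ℝ} {z : ℂ} (hz : z ∈ closedBall (c:ℂ) r) (h : r < |c - p|) :
    z - (p:ℂ) ≠ 0 :=
  sub_ne_of_cball hz (by rwa [dist_real])

lemma sub_ne_cross {c₁ c₂ : ℝ} {r₁ r₂ : ℝ} {z w : ℂ} (hz : z ∈ closedBall (c₁:ℂ) r₁)
    (hw : w ∈ closedBall (c₂:ℂ) r₂) (h : r₁ + r₂ < |c₁ - c₂|) : z - w ≠ 0 := by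
  intro h0
  rw [sub_eq_zero] at h0
  subst h0
  rw [mem_closedBall] at hz hw
  have h3 := dist_triangle (c₁:ℂ) z (c₂:ℂ)
  rw [dist_comm (c₁:ℂ) z] at h3
  rw [← dist_real] at h
  linarith [dist_comm z (c₂:ℂ) ▸ hw]

lemma sub_ne_center {c z : ℂ} {ρ : ℝ} (h0 : 0 < ρ) (hz : z ∉ ball c ρ) : z - c ≠ 0 := by
  intro h'
  rw [sub_eq_zero] at h'
  exact hz (h' ▸ mem_ball_self h0)

lemma flip_ne {a b : ℂ} (h : a - b ≠ 0) : b - a ≠ 0 := fun h' => h (by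
  rw [sub_eq_zero] at h' ⊢; exact h'.symm)

lemma add_ne_of_sub_ne {p : ℝ} {w : ℂ} (h : w - ((-p:ℝ):ℂ) ≠ 0) : w + (p:ℂ) ≠ 0 := by
  push_cast at h
  rwa [sub_neg_eq_add] at h

lemma sphere_sub_annulus {c : ℂ} {ρ r a : ℝ} (h1 : ρ ≤ r) (h2 : r ≤ a) {z : ℂ}
    (hz : z ∈ sphere c r) : z ∈ closedBall c a ∧ z ∉ ball c ρ := by
  rw [mem_sphere] at hz
  exact ⟨mem_closedBall.mpr (hz ▸ h2), fun hb => absurd (mem_ball.mp hb) (not_lt.mpr (hz ▸ h1))⟩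

/-! ### Function-specific lemmas -/

noncomputable def H12 (N n : ℕ) (α β x y : ℝ) (z w : ℂ) : ℂ :=
  PhiF N x z / PhiF N y w * (((1 / 2 : ℂ) - z) / ((1 / 2 : ℂ) - w)) ^ n *
    ((z + (α : ℂ)) / (w + (α : ℂ))) * (z + (β : ℂ)) *
    ((w - (β : ℂ)) / (w + (β : ℂ))) * (z + w) / (2 * z * (z - w))

noncomputable def Qf (N n : ℕ) (α y : ℝ) (w : ℂ) : ℂ :=
  (PhiF N y w)⁻¹ * ((1 / 2 : ℂ) - w)⁻¹ ^ n * (w + (α : ℂ))⁻¹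

lemma G12_eq_H12 (N n : ℕ) (α β x y : ℝ) (z w : ℂ) :
    G12 N n α β x y z w = (z - (β:ℂ))⁻¹ * H12 N n α β x y z w := by
  simp only [G12, H12, div_eq_mul_inv]; ring

lemma PhiF_neg (N : ℕ) (y : ℝ) (w : ℂ) : PhiF N y (-w) = (PhiF N y w)⁻¹ := by
  simp only [PhiF, mul_inv, ← Complex.exp_neg]
  rw [show -(-(y:ℂ) * w) = -(y:ℂ) * -w by ring]
  rw [show (1/2:ℂ) - -w = 1/2 + w by ring, show (1/2:ℂ) + -w = 1/2 - w by ring,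
    ← inv_pow, inv_div]

lemma Qf_reflect (N n : ℕ) (α y : ℝ) :
    (fun z => -Qf N n α y (-z)) =
      (fun z => PhiF N y z * ((1 / 2 : ℂ) + z)⁻¹ ^ n / (z - (α : ℂ))) := by
  funext z
  simp only [Qf, PhiF_neg, inv_inv]
  rw [show (1/2:ℂ) - -z = 1/2 + z by ring, show -z + (α:ℂ) = -(z - α) by ring]
  rw [inv_neg, div_eq_mul_inv]
  ring

lemma H12_beta (N n : ℕ) (α β x y : ℝ) (w : ℂ) (hb : (β:ℂ) ≠ 0)
    (h1 : w + (β:ℂ) ≠ 0) (h2 : (β:ℂ) - w ≠ 0) :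
    H12 N n α β x y (β:ℂ) w = (-((α:ℂ) + (β:ℂ)) * fplus N n β x) * Qf N n α y w := by
  have key : ((β:ℂ)+β) * ((w-β) * (w+β)⁻¹) * ((β:ℂ)+w) * (2*(β:ℂ)*((β:ℂ)-w))⁻¹ = -1 := by
    field_simp
    ring
  calc H12 N n α β x y (β:ℂ) w
      = (PhiF N x β * ((1/2:ℂ)-(β:ℂ))^n) * ((PhiF N y w)⁻¹ * ((1/2:ℂ)-w)⁻¹^n * (w+(α:ℂ))⁻¹)
          * ((β:ℂ)+α) * (((β:ℂ)+β) * ((w-β) * (w+β)⁻¹) * ((β:ℂ)+w) * (2*(β:ℂ)*((β:ℂ)-w))⁻¹) := by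
        simp only [H12, div_eq_mul_inv, mul_pow, inv_pow]
        ring
    _ = (-((α:ℂ) + (β:ℂ)) * fplus N n β x) * Qf N n α y w := by
        rw [key]; simp only [fplus, Qf]; ring

lemma diff_PhiF {N : ℕ} {x : ℝ} {z : ℂ} (h : (1/2:ℂ) - z ≠ 0) :
    DifferentiableAt ℂ (PhiF N x) z := by
  unfold PhiF
  exact (((differentiableAt_const _).mul differentiableAt_id).cexp).mul
    ((((differentiableAt_const _).add differentiableAt_id).div
      ((differentiableAt_const _).sub differentiableAt_id) h).pow _)

lemma PhiF_ne {N : ℕ} {y : ℝ} {w : ℂ} (h1 : (1/2:ℂ) + w ≠ 0) (h2 : (1/2:ℂ) - w ≠ 0) :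
    PhiF N y w ≠ 0 :=
  mul_ne_zero (Complex.exp_ne_zero _) (pow_ne_zero _ (div_ne_zero h1 h2))

lemma diff_G12_z {N n : ℕ} {α β x y : ℝ} {w z : ℂ} (hz2 : (1/2:ℂ) - z ≠ 0) (hz0 : z ≠ 0)
    (hzb : z - (β:ℂ) ≠ 0) (hzw : z - w ≠ 0) :
    DifferentiableAt ℂ (fun z => G12 N n α β x y z w) z := by
  unfold G12
  refine DifferentiableAt.div ?_ ?_ (mul_ne_zero (mul_ne_zero two_ne_zero hz0) hzw)
  · refine (((((((diff_PhiF hz2).div_const _).mul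
      ((((differentiableAt_const _).sub differentiableAt_id).div_const _).pow n)).mul
      ((differentiableAt_id.add_const _).div_const _)).mul
      ((differentiableAt_id.add_const _).div ((differentiableAt_id).sub_const _) hzb)).mul
      (differentiableAt_const _)).mul ((differentiableAt_id).add_const _))
  · exact ((differentiableAt_const _).mul differentiableAt_id).mul
      (differentiableAt_id.sub_const _)

lemma diff_H12_z {N n : ℕ} {α β x y : ℝ} {w z : ℂ} (hz2 : (1/2:ℂ) - z ≠ 0) (hz0 : z ≠ 0)
    (hzw : z - w ≠ 0) :
    DifferentiableAt ℂ (fun z => H12 N n α β x y z w) z := by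
  unfold H12
  refine DifferentiableAt.div ?_ ?_ (mul_ne_zero (mul_ne_zero two_ne_zero hz0) hzw)
  · refine (((((((diff_PhiF hz2).div_const _).mul
      ((((differentiableAt_const _).sub differentiableAt_id).div_const _).pow n)).mul
      ((differentiableAt_id.add_const _).div_const _)).mul
      ((differentiableAt_id).add_const _)).mul
      (differentiableAt_const _)).mul ((differentiableAt_id).add_const _))
  · exact ((differentiableAt_const _).mul differentiableAt_id).mul
      (differentiableAt_id.sub_const _)

lemma diff_G12_w {N n : ℕ} {α β x y : ℝ} {z w : ℂ} (hw2 : (1/2:ℂ) - w ≠ 0)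
    (hw1 : (1/2:ℂ) + w ≠ 0) (hwa : w + (α:ℂ) ≠ 0) (hwb : w + (β:ℂ) ≠ 0)
    (hz0 : z ≠ 0) (hzw : z - w ≠ 0) :
    DifferentiableAt ℂ (fun w => G12 N n α β x y z w) w := by
  unfold G12
  refine DifferentiableAt.div ?_ ?_ (mul_ne_zero (mul_ne_zero two_ne_zero hz0) hzw)
  · refine ((((((differentiableAt_const _).div (diff_PhiF hw2) (PhiF_ne hw1 hw2)).mul
      (((differentiableAt_const _).div
        ((differentiableAt_const _).sub differentiableAt_id) hw2).pow n)).mul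
      ((differentiableAt_const _).div (differentiableAt_id.add_const _) hwa)).mul
      (differentiableAt_const _)).mul
      ((differentiableAt_id.sub_const _).div (differentiableAt_id.add_const _) hwb)).mul
      ((differentiableAt_const _).add differentiableAt_id)
  · exact (differentiableAt_const _).mul ((differentiableAt_const _).sub differentiableAt_id)

lemma diff_Qf {N n : ℕ} {α y : ℝ} {w : ℂ} (hw2 : (1/2:ℂ) - w ≠ 0)
    (hw1 : (1/2:ℂ) + w ≠ 0) (hwa : w + (α:ℂ) ≠ 0) :
    DifferentiableAt ℂ (Qf N n α y) w := by
  unfold Qf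
  exact (((diff_PhiF hw2).inv (PhiF_ne hw1 hw2)).mul
    ((((differentiableAt_const _).sub differentiableAt_id).inv hw2).pow n)).mul
    ((differentiableAt_id.add_const _).inv hwa)

lemma cont_G12 {N n : ℕ} {α β x y : ℝ} {q : ℂ × ℂ} (hz2 : (1/2:ℂ) - q.1 ≠ 0) (hz0 : q.1 ≠ 0)
    (hzb : q.1 - (β:ℂ) ≠ 0) (hw2 : (1/2:ℂ) - q.2 ≠ 0) (hw1 : (1/2:ℂ) + q.2 ≠ 0)
    (hwa : q.2 + (α:ℂ) ≠ 0) (hwb : q.2 + (β:ℂ) ≠ 0) (hzw : q.1 - q.2 ≠ 0) :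
    ContinuousAt (fun p : ℂ × ℂ => G12 N n α β x y p.1 p.2) q := by
  unfold G12
  have hA : ContinuousAt (fun p : ℂ × ℂ => PhiF N x p.1) q :=
    ((diff_PhiF hz2).continuousAt).comp continuousAt_fst
  have hB : ContinuousAt (fun p : ℂ × ℂ => PhiF N y p.2) q :=
    ((diff_PhiF hw2).continuousAt).comp continuousAt_snd
  refine ContinuousAt.div ?_ ?_ (mul_ne_zero (mul_ne_zero two_ne_zero hz0) hzw)
  · exact (((((hA.div hB (PhiF_ne hw1 hw2)).mul
      (((continuousAt_const.sub continuousAt_fst).div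
        (continuousAt_const.sub continuousAt_snd) hw2).pow n)).mul
      ((continuousAt_fst.add continuousAt_const).div
        (continuousAt_snd.add continuousAt_const) hwa)).mul
      ((continuousAt_fst.add continuousAt_const).div
        (continuousAt_fst.sub continuousAt_const) hzb)).mul
      ((continuousAt_snd.sub continuousAt_const).div
        (continuousAt_snd.add continuousAt_const) hwb)).mul
      (continuousAt_fst.add continuousAt_snd)
  · exact (continuousAt_const.mul continuousAt_fst).mul
      (continuousAt_fst.sub continuousAt_snd)

/-! ### The contour-moving lemmas -/

lemma contG {N n : ℕ} {α β x y : ℝ} {c₁ c₂ : ℝ} {a ρ₁ b ρ₂ ra rb : ℝ}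
    (hρ₁ : 0 < ρ₁) (hρ₂ : 0 < ρ₂)
    (h1 : ρ₁ ≤ ra) (h2 : ra ≤ a) (h3 : ρ₂ ≤ rb) (h4 : rb ≤ b)
    (hdisj : a + b < |c₁ - c₂|)
    (hz : ∀ z : ℂ, z ∈ closedBall (c₁:ℂ) a → z ∉ ball (c₁:ℂ) ρ₁ →
      ((1/2:ℂ) - z ≠ 0 ∧ z ≠ 0 ∧ z - (β:ℂ) ≠ 0))
    (hw : ∀ w : ℂ, w ∈ closedBall (c₂:ℂ) b → w ∉ ball (c₂:ℂ) ρ₂ →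
      ((1/2:ℂ) - w ≠ 0 ∧ (1/2:ℂ) + w ≠ 0 ∧ w + (α:ℂ) ≠ 0 ∧ w + (β:ℂ) ≠ 0)) :
    ∀ θ₁ θ₂ : ℝ, ContinuousAt (fun p : ℂ × ℂ => G12 N n α β x y p.1 p.2)
      (circleMap (c₁:ℂ) ra θ₁, circleMap (c₂:ℂ) rb θ₂) := by
  intro θ₁ θ₂
  have hra : (0:ℝ) ≤ ra := (hρ₁.trans_le h1).le
  have hrb : (0:ℝ) ≤ rb := (hρ₂.trans_le h3).le
  obtain ⟨hz1, hz2⟩ := sphere_sub_annulus h1 h2 (circleMap_mem_sphere (c₁:ℂ) hra θ₁)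
  obtain ⟨hw1, hw2⟩ := sphere_sub_annulus h3 h4 (circleMap_mem_sphere (c₂:ℂ) hrb θ₂)
  obtain ⟨e1, e2, e3⟩ := hz _ hz1 hz2
  obtain ⟨f1, f2, f3, f4⟩ := hw _ hw1 hw2
  exact cont_G12 e1 e2 e3 f1 f2 f3 f4 (sub_ne_cross hz1 hw1 hdisj)

lemma pairA {N n : ℕ} {α β x y : ℝ} {c₂ : ℝ} {a b ρ₁ ρ₂ : ℝ}
    (h0a : 0 < ρ₁) (h0b : 0 < ρ₂) (hlea : ρ₁ ≤ a) (hleb : ρ₂ ≤ b)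
    (hdisj : a + b < |1/2 - c₂|)
    (hz : ∀ z : ℂ, z ∈ closedBall ((1/2:ℝ):ℂ) a → z ∉ ball ((1/2:ℝ):ℂ) ρ₁ →
      ((1/2:ℂ) - z ≠ 0 ∧ z ≠ 0 ∧ z - (β:ℂ) ≠ 0))
    (hw : ∀ w : ℂ, w ∈ closedBall (c₂:ℂ) b → w ∉ ball (c₂:ℂ) ρ₂ →
      ((1/2:ℂ) - w ≠ 0 ∧ (1/2:ℂ) + w ≠ 0 ∧ w + (α:ℂ) ≠ 0 ∧ w + (β:ℂ) ≠ 0)) :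
    cInt ((1/2:ℝ):ℂ) a (fun z => cInt (c₂:ℂ) b (fun w => G12 N n α β x y z w))
      = cInt ((1/2:ℝ):ℂ) ρ₁ (fun z => cInt (c₂:ℂ) ρ₂ (fun w => G12 N n α β x y z w)) := by
  have h0a' : (0:ℝ) ≤ a := (h0a.trans_le hlea).le
  have h0b' : (0:ℝ) ≤ b := (h0b.trans_le hleb).le
  calc cInt ((1/2:ℝ):ℂ) a (fun z => cInt (c₂:ℂ) b (fun w => G12 N n α β x y z w))
      = cInt (c₂:ℂ) b (fun w => cInt ((1/2:ℝ):ℂ) a (fun z => G12 N n α β x y z w)) :=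
        cInt_swap (contG h0a h0b hlea le_rfl hleb le_rfl hdisj hz hw)
    _ = cInt (c₂:ℂ) b (fun w => cInt ((1/2:ℝ):ℂ) ρ₁ (fun z => G12 N n α β x y z w)) := by
        refine cInt_congr h0b' (fun w hwmem => ?_)
        refine cInt_radius_eq h0a (h0a.trans_le hlea) ?_
        rw [max_eq_right hlea, min_eq_left hlea]
        intro z hzmem
        obtain ⟨e1, e2, e3⟩ := hz z hzmem.1 hzmem.2
        exact diff_G12_z e1 e2 e3
          (sub_ne_cross hzmem.1 (sphere_subset_closedBall hwmem) hdisj)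
    _ = cInt ((1/2:ℝ):ℂ) ρ₁ (fun z => cInt (c₂:ℂ) b (fun w => G12 N n α β x y z w)) :=
        (cInt_swap (contG h0a h0b le_rfl hlea hleb le_rfl hdisj hz hw)).symm
    _ = cInt ((1/2:ℝ):ℂ) ρ₁ (fun z => cInt (c₂:ℂ) ρ₂ (fun w => G12 N n α β x y z w)) := by
        refine cInt_congr h0a.le (fun z hzmem => ?_)
        have hzcb : z ∈ closedBall ((1/2:ℝ):ℂ) a :=
          closedBall_subset_closedBall hlea (sphere_subset_closedBall hzmem)
        have hznb : z ∉ ball ((1/2:ℝ):ℂ) ρ₁ :=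
          (sphere_sub_annulus le_rfl hlea hzmem).2
        obtain ⟨e1, e2, e3⟩ := hz z hzcb hznb
        refine cInt_radius_eq h0b (h0b.trans_le hleb) ?_
        rw [max_eq_right hleb, min_eq_left hleb]
        intro w hwmem
        obtain ⟨f1, f2, f3, f4⟩ := hw w hwmem.1 hwmem.2
        exact diff_G12_w f1 f2 f3 f4 e2 (sub_ne_cross hzcb hwmem.1 hdisj)

/-! ### Singularity-avoidance packages -/

lemma pack_z {β : ℝ} {a ρ : ℝ} (hρ : 0 < ρ) (hok : okCircle (1/2) a [0, β]) :
    ∀ z : ℂ, z ∈ closedBall ((1/2:ℝ):ℂ) a → z ∉ ball ((1/2:ℝ):ℂ) ρ →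
      ((1/2:ℂ) - z ≠ 0 ∧ z ≠ 0 ∧ z - (β:ℂ) ≠ 0) := by
  intro z h1 h2
  refine ⟨?_, ?_, ?_⟩
  · have := flip_ne (sub_ne_center hρ h2)
    convert this using 2
    norm_num
  · have := sub_ne_real h1 (hok.2 0 (by simp))
    simpa using this
  · exact sub_ne_real h1 (hok.2 β (by simp))

lemma pack_zB {β : ℝ} {s ρ : ℝ} (hρ : 0 < ρ) (hok : okCircle β s [0, 1/2]) :
    ∀ z : ℂ, z ∈ closedBall ((β:ℝ):ℂ) s → z ∉ ball ((β:ℝ):ℂ) ρ →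
      ((1/2:ℂ) - z ≠ 0 ∧ z ≠ 0 ∧ z - (β:ℂ) ≠ 0) := by
  intro z h1 h2
  refine ⟨?_, ?_, ?_⟩
  · have := flip_ne (sub_ne_real h1 (hok.2 (1/2) (by simp)))
    convert this using 2
    norm_num
  · have := sub_ne_real h1 (hok.2 0 (by simp))
    simpa using this
  · exact sub_ne_center hρ h2

lemma pack_half {α β : ℝ} {b ρ : ℝ} (hρ : 0 < ρ) (hok : okCircle (-(1/2)) b [-α, -β, 1/2]) :
    ∀ w : ℂ, w ∈ closedBall ((-(1/2):ℝ):ℂ) b → w ∉ ball ((-(1/2):ℝ):ℂ) ρ →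
      ((1/2:ℂ) - w ≠ 0 ∧ (1/2:ℂ) + w ≠ 0 ∧ w + (α:ℂ) ≠ 0 ∧ w + (β:ℂ) ≠ 0) := by
  intro w h1 h2
  refine ⟨?_, ?_, ?_, ?_⟩
  · have := flip_ne (sub_ne_real h1 (hok.2 (1/2) (by simp)))
    convert this using 2
    norm_num
  · have := add_ne_of_sub_ne (p := 1/2) (sub_ne_center hρ h2)
    rw [add_comm] at this
    convert this using 2
    norm_num
  · exact add_ne_of_sub_ne (sub_ne_real h1 (hok.2 (-α) (by simp)))
  · exact add_ne_of_sub_ne (sub_ne_real h1 (hok.2 (-β) (by simp)))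

lemma pack_alpha {α β : ℝ} {b ρ : ℝ} (hρ : 0 < ρ) (hok : okCircle (-α) b [-(1/2), -β, 1/2]) :
    ∀ w : ℂ, w ∈ closedBall ((-α:ℝ):ℂ) b → w ∉ ball ((-α:ℝ):ℂ) ρ →
      ((1/2:ℂ) - w ≠ 0 ∧ (1/2:ℂ) + w ≠ 0 ∧ w + (α:ℂ) ≠ 0 ∧ w + (β:ℂ) ≠ 0) := by
  intro w h1 h2
  refine ⟨?_, ?_, ?_, ?_⟩
  · have := flip_ne (sub_ne_real h1 (hok.2 (1/2) (by simp)))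
    convert this using 2
    norm_num
  · have := add_ne_of_sub_ne (p := 1/2) (sub_ne_real h1 (hok.2 (-(1/2)) (by simp)))
    rw [add_comm] at this
    convert this using 2
    norm_num
  · exact add_ne_of_sub_ne (sub_ne_center hρ h2)
  · exact add_ne_of_sub_ne (sub_ne_real h1 (hok.2 (-β) (by simp)))

lemma pack_beta {α β : ℝ} {b ρ : ℝ} (hρ : 0 < ρ) (hok : okCircle (-β) b [-(1/2), -α, 1/2]) :
    ∀ w : ℂ, w ∈ closedBall ((-β:ℝ):ℂ) b → w ∉ ball ((-β:ℝ):ℂ) ρ →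
      ((1/2:ℂ) - w ≠ 0 ∧ (1/2:ℂ) + w ≠ 0 ∧ w + (α:ℂ) ≠ 0 ∧ w + (β:ℂ) ≠ 0) := by
  intro w h1 h2
  refine ⟨?_, ?_, ?_, ?_⟩
  · have := flip_ne (sub_ne_real h1 (hok.2 (1/2) (by simp)))
    convert this using 2
    norm_num
  · have := add_ne_of_sub_ne (p := 1/2) (sub_ne_real h1 (hok.2 (-(1/2)) (by simp)))
    rw [add_comm] at this
    convert this using 2
    norm_num
  · exact add_ne_of_sub_ne (sub_ne_real h1 (hok.2 (-α) (by simp)))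
  · exact add_ne_of_sub_ne (sub_ne_center hρ h2)

/-! ### System A : moving all four contours to canonical radii -/

lemma Ksys {N n : ℕ} {α β x y : ℝ}
    {a₁ a₂ a₃ a₄ ρ₁ ρ₂ ρ₃ ρ₄ : ℝ}
    (ha₁ : okCircle (1/2) a₁ [0, β]) (ha₂ : okCircle (-(1/2)) a₂ [-α, -β, 1/2])
    (ha₃ : okCircle (-α) a₃ [-(1/2), -β, 1/2]) (ha₄ : okCircle (-β) a₄ [-(1/2), -α, 1/2])
    (h₁₂ : disjC (1/2) a₁ (-(1/2)) a₂) (h₁₃ : disjC (1/2) a₁ (-α) a₃)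
    (h₁₄ : disjC (1/2) a₁ (-β) a₄)
    (hρ₁ : 0 < ρ₁) (hρ₂ : 0 < ρ₂) (hρ₃ : 0 < ρ₃) (hρ₄ : 0 < ρ₄)
    (hle₁ : ρ₁ ≤ a₁) (hle₂ : ρ₂ ≤ a₂) (hle₃ : ρ₃ ≤ a₃) (hle₄ : ρ₄ ≤ a₄) :
    cInt ((1/2:ℝ):ℂ) a₁ (fun z =>
        cInt ((-(1/2):ℝ):ℂ) a₂ (fun w => G12 N n α β x y z w)
        + cInt ((-α:ℝ):ℂ) a₃ (fun w => G12 N n α β x y z w)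
        + cInt ((-β:ℝ):ℂ) a₄ (fun w => G12 N n α β x y z w))
    = cInt ((1/2:ℝ):ℂ) ρ₁ (fun z =>
        cInt ((-(1/2):ℝ):ℂ) ρ₂ (fun w => G12 N n α β x y z w)
        + cInt ((-α:ℝ):ℂ) ρ₃ (fun w => G12 N n α β x y z w)
        + cInt ((-β:ℝ):ℂ) ρ₄ (fun w => G12 N n α β x y z w)) := by
  have d₁₂ : a₁ + a₂ < |1/2 - (-(1/2))| := h₁₂
  have d₁₃ : a₁ + a₃ < |1/2 - (-α)| := h₁₃
  have d₁₄ : a₁ + a₄ < |1/2 - (-β)| := h₁₄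
  have hz := pack_z hρ₁ ha₁
  have hw₂ := pack_half (α := α) (β := β) hρ₂ ha₂
  have hw₃ := pack_alpha (α := α) (β := β) hρ₃ ha₃
  have hw₄ := pack_beta (α := α) (β := β) hρ₄ ha₄
  have i₂ := circleIntegrable_param (contG (N := N) (n := n) (x := x) (y := y) hρ₁ hρ₂ hle₁ le_rfl hle₂ le_rfl d₁₂ hz hw₂)
  have i₃ := circleIntegrable_param (contG (N := N) (n := n) (x := x) (y := y) hρ₁ hρ₃ hle₁ le_rfl hle₃ le_rfl d₁₃ hz hw₃)
  have i₄ := circleIntegrable_param (contG (N := N) (n := n) (x := x) (y := y) hρ₁ hρ₄ hle₁ le_rfl hle₄ le_rfl d₁₄ hz hw₄)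
  have j₂ := circleIntegrable_param (contG (N := N) (n := n) (x := x) (y := y) hρ₁ hρ₂ le_rfl hle₁ le_rfl hle₂ d₁₂ hz hw₂)
  have j₃ := circleIntegrable_param (contG (N := N) (n := n) (x := x) (y := y) hρ₁ hρ₃ le_rfl hle₁ le_rfl hle₃ d₁₃ hz hw₃)
  have j₄ := circleIntegrable_param (contG (N := N) (n := n) (x := x) (y := y) hρ₁ hρ₄ le_rfl hle₁ le_rfl hle₄ d₁₄ hz hw₄)
  rw [cInt_add3 i₂ i₃ i₄, cInt_add3 j₂ j₃ j₄,
      pairA hρ₁ hρ₂ hle₁ hle₂ d₁₂ hz hw₂,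
      pairA hρ₁ hρ₃ hle₁ hle₃ d₁₃ hz hw₃,
      pairA hρ₁ hρ₄ hle₁ hle₄ d₁₄ hz hw₄]

/-! ### System B : evaluating the Γ_β contour -/

lemma pairB {N n : ℕ} {α β x y : ℝ} {c₂ : ℝ} {s b u : ℝ}
    (hb0 : 0 < β) (h0s : 0 < s) (h0b : 0 < b) (h0u : 0 < u)
    (hokz : okCircle β s [0, 1/2])
    (hdisj : s + b < |β - c₂|)
    (hw : ∀ w : ℂ, w ∈ closedBall ((c₂:ℝ):ℂ) b → w ∉ ball ((c₂:ℝ):ℂ) b →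
      ((1/2:ℂ) - w ≠ 0 ∧ (1/2:ℂ) + w ≠ 0 ∧ w + (α:ℂ) ≠ 0 ∧ w + (β:ℂ) ≠ 0))
    (hQ : ∀ w : ℂ, w ∈ closedBall ((c₂:ℝ):ℂ) (max u b) \ ball ((c₂:ℝ):ℂ) (min u b) →
      ((1/2:ℂ) - w ≠ 0 ∧ (1/2:ℂ) + w ≠ 0 ∧ w + (α:ℂ) ≠ 0)) :
    cInt ((β:ℝ):ℂ) s (fun z => cInt ((c₂:ℝ):ℂ) b (fun w => G12 N n α β x y z w))
      = (-((α:ℂ) + (β:ℂ)) * fplus N n β x) * cInt ((c₂:ℝ):ℂ) u (Qf N n α y) := by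
  have hz := pack_zB h0s hokz
  calc cInt ((β:ℝ):ℂ) s (fun z => cInt ((c₂:ℝ):ℂ) b (fun w => G12 N n α β x y z w))
      = cInt ((c₂:ℝ):ℂ) b (fun w => cInt ((β:ℝ):ℂ) s (fun z => G12 N n α β x y z w)) :=
        cInt_swap (contG h0s h0b le_rfl le_rfl le_rfl le_rfl hdisj hz hw)
    _ = cInt ((c₂:ℝ):ℂ) b
        (fun w => (-((α:ℂ) + (β:ℂ)) * fplus N n β x) * Qf N n α y w) := by
        refine cInt_congr h0b.le (fun w hwmem => ?_)
        have hwcb : w ∈ closedBall ((c₂:ℝ):ℂ) b := sphere_subset_closedBall hwmem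
        have hwnb : w ∉ ball ((c₂:ℝ):ℂ) b := (sphere_sub_annulus le_rfl le_rfl hwmem).2
        obtain ⟨f1, f2, f3, f4⟩ := hw w hwcb hwnb
        have hbw : ((β:ℝ):ℂ) - w ≠ 0 := sub_ne_cross (mem_closedBall_self h0s.le) hwcb hdisj
        show cInt ((β:ℝ):ℂ) s (fun z => G12 N n α β x y z w) = _
        calc cInt ((β:ℝ):ℂ) s (fun z => G12 N n α β x y z w)
            = cInt ((β:ℝ):ℂ) s (fun z => (z - ((β:ℝ):ℂ))⁻¹ * H12 N n α β x y z w) := by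
              simp_rw [G12_eq_H12]
          _ = H12 N n α β x y ((β:ℝ):ℂ) w := by
              refine cInt_center h0s (fun z h1 => ?_)
              have e1 : (1/2:ℂ) - z ≠ 0 := by
                have := flip_ne (sub_ne_real h1 (hokz.2 (1/2) (by simp)))
                convert this using 2
                norm_num
              have e2 : z ≠ 0 := by
                have := sub_ne_real h1 (hokz.2 0 (by simp))
                simpa using this
              exact diff_H12_z e1 e2 (sub_ne_cross h1 hwcb hdisj)
          _ = (-((α:ℂ) + (β:ℂ)) * fplus N n β x) * Qf N n α y w :=
              H12_beta N n α β x y w (Complex.ofReal_ne_zero.mpr hb0.ne') f4 hbw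
    _ = (-((α:ℂ) + (β:ℂ)) * fplus N n β x) * cInt ((c₂:ℝ):ℂ) b (Qf N n α y) := by
        rw [← cInt_const_mul]
    _ = (-((α:ℂ) + (β:ℂ)) * fplus N n β x) * cInt ((c₂:ℝ):ℂ) u (Qf N n α y) := by
        rw [cInt_radius_eq h0u h0b (fun w hwmem => ?_)]
        obtain ⟨f1, f2, f3⟩ := hQ w hwmem
        exact diff_Qf f1 f2 f3

lemma cInt_reflect_Q {N n : ℕ} {α y : ℝ} (c : ℝ) (u : ℝ) :
    cInt (-(c:ℂ)) u (Qf N n α y) = cInt (c:ℂ) u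
      (fun z => PhiF N y z * ((1 / 2 : ℂ) + z)⁻¹ ^ n / (z - (α : ℂ))) := by
  unfold cInt
  rw [circleIntegral_neg_center (c:ℂ) u (Qf N n α y)]
  rw [show (fun z => -Qf N n α y (-z)) =
    (fun z => PhiF N y z * ((1 / 2 : ℂ) + z)⁻¹ ^ n / (z - (α : ℂ))) from Qf_reflect N n α y]

/-- Decomposition of the (12) entry:
K₁₂(x,y) = K̄₁₂(x,y) + (α+β)·f₊^β(x)·g₂(y). -/
theorem stmt4 (N : ℕ) (hN : 1 ≤ N) (n : ℕ) (hn : n ≤ N - 1)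
    (α β : ℝ) (hα : α ∈ Set.Ioo (-(1 / 2) : ℝ) (1 / 2)) (hβ : β ∈ Set.Ioo (0 : ℝ) (1 / 2))
    (hab : 0 < α + β) (hne : α ≠ β) (x y : ℝ)
    -- K₁₂, first double integral: z ∈ Γ_{1/2}, w ∈ Γ_{−1/2,−α,−β}
    (r₁ r₂ r₃ r₄ : ℝ)
    (h₁ : okCircle (1 / 2) r₁ [0, β]) (h₂ : okCircle (-(1 / 2)) r₂ [-α, -β, 1 / 2])
    (h₃ : okCircle (-α) r₃ [-(1 / 2), -β, 1 / 2]) (h₄ : okCircle (-β) r₄ [-(1 / 2), -α, 1 / 2])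
    (h₂₃ : disjC (-(1 / 2)) r₂ (-α) r₃) (h₂₄ : disjC (-(1 / 2)) r₂ (-β) r₄)
    (h₃₄ : disjC (-α) r₃ (-β) r₄)
    (h₁₂ : disjC (1 / 2) r₁ (-(1 / 2)) r₂) (h₁₃ : disjC (1 / 2) r₁ (-α) r₃)
    (h₁₄ : disjC (1 / 2) r₁ (-β) r₄)
    -- K₁₂, second double integral: z ∈ Γ_{β}, w ∈ Γ_{−1/2,−α}
    (s₁ s₂ s₃ : ℝ)
    (hs₁ : okCircle β s₁ [0, 1 / 2]) (hs₂ : okCircle (-(1 / 2)) s₂ [-α, -β, 1 / 2])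
    (hs₃ : okCircle (-α) s₃ [-(1 / 2), -β, 1 / 2])
    (hs₂₃ : disjC (-(1 / 2)) s₂ (-α) s₃)
    (hs₁₂ : disjC β s₁ (-(1 / 2)) s₂) (hs₁₃ : disjC β s₁ (-α) s₃)
    -- K̄₁₂: z ∈ Γ_{1/2}, w ∈ Γ_{−1/2,−α,−β}
    (t₁ t₂ t₃ t₄ : ℝ)
    (ht₁ : okCircle (1 / 2) t₁ [0, β]) (ht₂ : okCircle (-(1 / 2)) t₂ [-α, -β, 1 / 2])
    (ht₃ : okCircle (-α) t₃ [-(1 / 2), -β, 1 / 2]) (ht₄ : okCircle (-β) t₄ [-(1 / 2), -α, 1 / 2])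
    (ht₂₃ : disjC (-(1 / 2)) t₂ (-α) t₃) (ht₂₄ : disjC (-(1 / 2)) t₂ (-β) t₄)
    (ht₃₄ : disjC (-α) t₃ (-β) t₄)
    (ht₁₂ : disjC (1 / 2) t₁ (-(1 / 2)) t₂) (ht₁₃ : disjC (1 / 2) t₁ (-α) t₃)
    (ht₁₄ : disjC (1 / 2) t₁ (-β) t₄)
    -- radii for g₂
    (u₁ u₂ : ℝ) (hu₁ : okCircle (1 / 2) u₁ [α, -(1 / 2)]) (hu₂ : okCircle α u₂ [1 / 2, -(1 / 2)])
    (hu : disjC (1 / 2) u₁ α u₂) :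
    -(cInt (1 / 2) r₁ (fun z =>
          cInt (-(1 / 2)) r₂ (fun w => G12 N n α β x y z w) +
            cInt (-(α : ℂ)) r₃ (fun w => G12 N n α β x y z w) +
            cInt (-(β : ℂ)) r₄ (fun w => G12 N n α β x y z w)) +
        cInt (β : ℂ) s₁ (fun z =>
          cInt (-(1 / 2)) s₂ (fun w => G12 N n α β x y z w) +
            cInt (-(α : ℂ)) s₃ (fun w => G12 N n α β x y z w))) =
      -cInt (1 / 2) t₁ (fun z =>
          cInt (-(1 / 2)) t₂ (fun w => G12 N n α β x y z w) +
            cInt (-(α : ℂ)) t₃ (fun w => G12 N n α β x y z w) +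
            cInt (-(β : ℂ)) t₄ (fun w => G12 N n α β x y z w)) +
        ((α : ℂ) + (β : ℂ)) * fplus N n β x * g2F N n α y u₁ u₂ := by
  obtain ⟨hβ1, hβ2⟩ := hβ
  -- Part A : the r-system and the t-system have equal double integrals.
  have KA := (Ksys (N := N) (n := n) (x := x) (y := y) h₁ h₂ h₃ h₄ h₁₂ h₁₃ h₁₄
      (lt_min h₁.1 ht₁.1) (lt_min h₂.1 ht₂.1) (lt_min h₃.1 ht₃.1) (lt_min h₄.1 ht₄.1)
      (min_le_left _ _) (min_le_left _ _) (min_le_left _ _) (min_le_left _ _)).trans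
    (Ksys (N := N) (n := n) (x := x) (y := y) ht₁ ht₂ ht₃ ht₄ ht₁₂ ht₁₃ ht₁₄
      (lt_min h₁.1 ht₁.1) (lt_min h₂.1 ht₂.1) (lt_min h₃.1 ht₃.1) (lt_min h₄.1 ht₄.1)
      (min_le_right _ _) (min_le_right _ _) (min_le_right _ _) (min_le_right _ _)).symm
  push_cast at KA
  -- Part B : split the Γ_β double integral.
  have iB₂ := circleIntegrable_param (contG (N := N) (n := n) (x := x) (y := y)
    hs₁.1 hs₂.1 le_rfl le_rfl le_rfl le_rfl
    (show s₁ + s₂ < |β - (-(1/2))| from hs₁₂) (pack_zB hs₁.1 hs₁) (pack_half hs₂.1 hs₂))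
  have iB₃ := circleIntegrable_param (contG (N := N) (n := n) (x := x) (y := y)
    hs₁.1 hs₃.1 le_rfl le_rfl le_rfl le_rfl
    (show s₁ + s₃ < |β - (-α)| from hs₁₃) (pack_zB hs₁.1 hs₁) (pack_alpha hs₃.1 hs₃))
  have splitB := cInt_add2 iB₂ iB₃
  push_cast at splitB
  -- Part B : evaluate each piece.
  have hQ2 : ∀ w : ℂ, w ∈ closedBall (((-(1/2):ℝ)):ℂ) (max u₁ s₂) \
      ball (((-(1/2):ℝ)):ℂ) (min u₁ s₂) →
      ((1/2:ℂ) - w ≠ 0 ∧ (1/2:ℂ) + w ≠ 0 ∧ w + (α:ℂ) ≠ 0) := by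
    intro w hmem
    obtain ⟨hw1, hw2⟩ := hmem
    have m1 : max u₁ s₂ < |(-(1/2):ℝ) - 1/2| := by
      apply max_lt
      · have := hu₁.2 (-(1/2)) (by simp)
        rwa [abs_sub_comm] at this
      · exact hs₂.2 (1/2) (by simp)
    have m2 : max u₁ s₂ < |(-(1/2):ℝ) - (-α)| := by
      apply max_lt
      · have := hu₁.2 α (by simp)
        rwa [show ((-(1/2):ℝ) - (-α)) = -(1/2 - α) by ring, abs_neg]
      · exact hs₂.2 (-α) (by simp)
    refine ⟨?_, ?_, ?_⟩
    · have := flip_ne (sub_ne_real hw1 m1)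
      convert this using 2
      norm_num
    · have := add_ne_of_sub_ne (p := 1/2) (sub_ne_center (lt_min hu₁.1 hs₂.1) hw2)
      rw [add_comm] at this
      convert this using 2
      norm_num
    · exact add_ne_of_sub_ne (sub_ne_real hw1 m2)
  have hQ3 : ∀ w : ℂ, w ∈ closedBall (((-α:ℝ)):ℂ) (max u₂ s₃) \
      ball (((-α:ℝ)):ℂ) (min u₂ s₃) →
      ((1/2:ℂ) - w ≠ 0 ∧ (1/2:ℂ) + w ≠ 0 ∧ w + (α:ℂ) ≠ 0) := by
    intro w hmem
    obtain ⟨hw1, hw2⟩ := hmem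
    have m1 : max u₂ s₃ < |(-α:ℝ) - 1/2| := by
      apply max_lt
      · have := hu₂.2 (-(1/2)) (by simp)
        rwa [show ((-α:ℝ) - 1/2) = -(α - -(1/2)) by ring, abs_neg]
      · exact hs₃.2 (1/2) (by simp)
    have m2 : max u₂ s₃ < |(-α:ℝ) - (-(1/2))| := by
      apply max_lt
      · have := hu₂.2 (1/2) (by simp)
        rwa [show ((-α:ℝ) - (-(1/2))) = -(α - 1/2) by ring, abs_neg]
      · exact hs₃.2 (-(1/2)) (by simp)
    refine ⟨?_, ?_, ?_⟩
    · have := flip_ne (sub_ne_real hw1 m1)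
      convert this using 2
      norm_num
    · have := add_ne_of_sub_ne (p := 1/2) (sub_ne_real hw1 m2)
      rw [add_comm] at this
      convert this using 2
      norm_num
    · exact add_ne_of_sub_ne (sub_ne_center (lt_min hu₂.1 hs₃.1) hw2)
  have KB₂ := pairB (N := N) (n := n) (x := x) (y := y) (c₂ := (-(1/2) : ℝ))
    hβ1 hs₁.1 hs₂.1 hu₁.1 hs₁
    (show s₁ + s₂ < |β - (-(1/2))| from hs₁₂) (pack_half hs₂.1 hs₂) hQ2
  have KB₃ := pairB (N := N) (n := n) (x := x) (y := y) (c₂ := (-α : ℝ))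
    hβ1 hs₁.1 hs₃.1 hu₂.1 hs₁
    (show s₁ + s₃ < |β - (-α)| from hs₁₃) (pack_alpha hs₃.1 hs₃) hQ3
  push_cast at KB₂ KB₃
  -- reflection : rewrite g₂ in terms of Qf
  have refl2 := cInt_reflect_Q (N := N) (n := n) (α := α) (y := y) (1/2 : ℝ) u₁
  have refl3 := cInt_reflect_Q (N := N) (n := n) (α := α) (y := y) α u₂
  push_cast at refl2 refl3
  have g2eq : g2F N n α y u₁ u₂
      = cInt (-(1/2 : ℂ)) u₁ (Qf N n α y) + cInt (-(α : ℂ)) u₂ (Qf N n α y) := by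
    unfold g2F
    rw [← refl2, ← refl3]
  rw [KA, splitB, KB₂, KB₃, g2eq]
  ring
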